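/- Let n be an integer with n ≤ −3, set l = |n| > 2, d = 2 − 2cos(π/(2l−1)) and d′ = 2 − 2cos(3π/(2l−1)), so that 0 < d < d′ < 4. Then for every real s > 0 there exists a real number T with s + 2 + d/s < T < s + 2 + d′/s such that φ_n(s,T) = 0. -/

import Mathlib

/-- Auxiliary Chebyshev-like sequence: `tauAux k 0 = 0`, `tauAux k 1 = 1`,
`tauAux k (m+2) = k * tauAux k (m+1) - tauAux k m`. -/
def tauAux (k : ℝ) : ℕ → ℝ
  | 0 => 0
  | 1 => 1
  | (m + 2) => k * tauAux k (m + 1) - tauAux k m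

/-- The two-sided sequence `τ_m` (`m ∈ ℤ`) determined by `τ_0 = 0`, `τ_1 = 1` and
`τ_{m+1} = (s² - (T-2)s + 2) τ_m - τ_{m-1}`; it satisfies `τ_{-m} = -τ_m`. -/
def tauZ (s T : ℝ) (m : ℤ) : ℝ :=
  if 0 ≤ m then tauAux (s ^ 2 - (T - 2) * s + 2) m.toNat
  else -tauAux (s ^ 2 - (T - 2) * s + 2) (-m).toNat

/-- The Riley polynomial of the `n`-twist knot: `φ_n(s,T) = τ_{n+1} - (T - 1 - s) τ_n`. -/
def rileyPhi (n : ℤ) (s T : ℝ) : ℝ :=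
  tauZ s T (n + 1) - (T - 1 - s) * tauZ s T n

/-!
Substituting `T = s + 2 + (2 - 2 cos θ) / s` turns the recursion coefficient into `2 cos θ`, so
`τ_m sin θ = sin (m θ)`. For `n = -(m + 1)` this gives
`φ_n sin θ = (1 + (2 - 2 cos θ) / s) sin ((m + 1) θ) - sin (m θ)`.
When `(2m + 1) θ` is an odd multiple of `π` the two sines agree, leaving
`(2 - 2 cos θ) / s · sin ((m + 1) θ)`. At `θ = π / (2m + 1)` this is positive, and at
`θ = 3π / (2m + 1)` it is negative because `(m + 1) θ ∈ (π, 2π)` once `m ≥ 2`; the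
intermediate value theorem in `T` gives the root.
-/

open Real

lemma tauAux_two_mul_cos_mul_sin (θ : ℝ) : ∀ m : ℕ,
    tauAux (2 * cos θ) m * sin θ = sin (m * θ)
  | 0 => by simp [tauAux]
  | 1 => by simp [tauAux]
  | m + 2 => by
    have h₁ := tauAux_two_mul_cos_mul_sin θ (m + 1)
    have h₀ := tauAux_two_mul_cos_mul_sin θ m
    have hadd := sin_add ((m + 1) * θ) θ
    have hsub := sin_sub ((m + 1) * θ) θ
    simp only [tauAux, Nat.cast_add, Nat.cast_one, Nat.cast_ofNat] at h₁ ⊢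
    rw [show ((m : ℝ) + 2) * θ = (m + 1) * θ + θ by ring]
    rw [show ((m : ℝ) + 1) * θ - θ = m * θ by ring] at hsub
    linear_combination 2 * cos θ * h₁ - h₀ - hadd - hsub

lemma continuous_tauAux : ∀ m : ℕ, Continuous (fun k : ℝ => tauAux k m)
  | 0 => continuous_const
  | 1 => continuous_const
  | m + 2 => (continuous_id.mul (continuous_tauAux (m + 1))).sub (continuous_tauAux m)

lemma continuous_tauZ (s : ℝ) (m : ℤ) : Continuous (fun T => tauZ s T m) := by
  unfold tauZ
  split_ifs
  · exact (continuous_tauAux _).comp (by fun_prop)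
  · exact ((continuous_tauAux _).comp (by fun_prop)).neg

lemma continuous_rileyPhi (n : ℤ) (s : ℝ) : Continuous (rileyPhi n s) :=
  (continuous_tauZ s (n + 1)).sub ((by fun_prop : Continuous fun T : ℝ => T - 1 - s).mul
    (continuous_tauZ s n))

lemma tauZ_neg_natCast (s T : ℝ) (m : ℕ) :
    tauZ s T (-m) = -tauAux (s ^ 2 - (T - 2) * s + 2) m := by
  rcases Nat.eq_zero_or_pos m with rfl | hm
  · simp [tauZ, tauAux]
  · rw [tauZ, if_neg (by omega)]
    simp

lemma rileyPhi_neg_natCast_succ (s T : ℝ) (m : ℕ) :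
    rileyPhi (-(m + 1 : ℕ)) s T = (T - 1 - s) * tauAux (s ^ 2 - (T - 2) * s + 2) (m + 1)
      - tauAux (s ^ 2 - (T - 2) * s + 2) m := by
  rw [rileyPhi, show (-((m + 1 : ℕ) : ℤ) + 1) = -(m : ℤ) by push_cast; ring,
    tauZ_neg_natCast, tauZ_neg_natCast]
  ring

lemma sq_sub_mul_add_two_eq_two_mul_cos {s : ℝ} (hs : s ≠ 0) (θ : ℝ) :
    s ^ 2 - (s + 2 + (2 - 2 * cos θ) / s - 2) * s + 2 = 2 * cos θ := by
  field_simp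
  ring

lemma rileyPhi_mul_sin {s : ℝ} (hs : s ≠ 0) (m : ℕ) (θ : ℝ) :
    rileyPhi (-(m + 1 : ℕ)) s (s + 2 + (2 - 2 * cos θ) / s) * sin θ
      = (1 + (2 - 2 * cos θ) / s) * sin ((m + 1) * θ) - sin (m * θ) := by
  rw [rileyPhi_neg_natCast_succ, sq_sub_mul_add_two_eq_two_mul_cos hs, sub_mul, mul_assoc,
    tauAux_two_mul_cos_mul_sin, tauAux_two_mul_cos_mul_sin]
  push_cast
  ring

lemma sin_mul_eq_sin_succ_mul {m : ℕ} {j : ℤ} {θ : ℝ} (h : (2 * m + 1) * θ = (2 * j + 1) * π) :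
    sin (m * θ) = sin ((m + 1) * θ) := by
  rw [show (m : ℝ) * θ = π - (m + 1) * θ + j * (2 * π) by linear_combination h,
    sin_add_int_mul_two_pi, sin_pi_sub]

lemma rileyPhi_eq_of_odd_multiple {s : ℝ} (hs : s ≠ 0) {m : ℕ} {j : ℤ} {θ : ℝ}
    (h : (2 * m + 1) * θ = (2 * j + 1) * π) (hθ : sin θ ≠ 0) :
    rileyPhi (-(m + 1 : ℕ)) s (s + 2 + (2 - 2 * cos θ) / s)
      = (2 - 2 * cos θ) / s * sin ((m + 1) * θ) / sin θ := by
  rw [eq_div_iff hθ, rileyPhi_mul_sin hs, sin_mul_eq_sin_succ_mul h]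
  ring

lemma rileyPhi_pos_at_pi_div {m : ℕ} (hm : 1 ≤ m) {s : ℝ} (hs : 0 < s) :
    0 < rileyPhi (-(m + 1 : ℕ)) s (s + 2 + (2 - 2 * cos (π / (2 * m + 1))) / s) := by
  have hN : (3 : ℝ) ≤ 2 * m + 1 := by norm_cast; omega
  set θ := π / (2 * m + 1)
  have hθ₀ : 0 < θ := by positivity
  have hθπ : θ < π := div_lt_self pi_pos (by linarith)
  have hsucc : (m + 1) * θ < π := by
    rw [mul_div_assoc', div_lt_iff₀ (by linarith)]
    nlinarith [pi_pos]
  have hcos : cos θ < 1 := by simpa using cos_lt_cos_of_nonneg_of_le_pi le_rfl hθπ.le hθ₀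
  have hsin := sin_pos_of_pos_of_lt_pi hθ₀ hθπ
  rw [rileyPhi_eq_of_odd_multiple hs.ne' (j := 0) (by simp [θ]; field_simp) hsin.ne']
  exact div_pos (mul_pos (div_pos (by linarith) hs)
    (sin_pos_of_pos_of_lt_pi (by positivity) hsucc)) hsin

lemma three_pi_div_lt_pi {m : ℕ} (hm : 2 ≤ m) : 3 * π / (2 * m + 1) < π := by
  have hN : (5 : ℝ) ≤ 2 * m + 1 := by norm_cast; omega
  rw [div_lt_iff₀ (by linarith)]
  nlinarith [pi_pos]

lemma rileyPhi_neg_at_three_pi_div {m : ℕ} (hm : 2 ≤ m) {s : ℝ} (hs : 0 < s) :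
    rileyPhi (-(m + 1 : ℕ)) s (s + 2 + (2 - 2 * cos (3 * π / (2 * m + 1))) / s) < 0 := by
  have hN : (5 : ℝ) ≤ 2 * m + 1 := by norm_cast; omega
  set θ := 3 * π / (2 * m + 1)
  have hθ₀ : 0 < θ := by positivity
  have hθπ : θ < π := three_pi_div_lt_pi hm
  have hsucc₁ : π < (m + 1) * θ := by
    rw [mul_div_assoc', lt_div_iff₀ (by linarith)]
    nlinarith [pi_pos]
  have hsucc₂ : (m + 1) * θ < 2 * π := by
    rw [mul_div_assoc', div_lt_iff₀ (by linarith)]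
    nlinarith [pi_pos]
  have hcos : cos θ < 1 := by simpa using cos_lt_cos_of_nonneg_of_le_pi le_rfl hθπ.le hθ₀
  have hsin := sin_pos_of_pos_of_lt_pi hθ₀ hθπ
  have hsin_succ : sin ((m + 1) * θ) < 0 := by
    rw [← sin_sub_two_pi]
    exact sin_neg_of_neg_of_neg_pi_lt (by linarith) (by linarith)
  rw [rileyPhi_eq_of_odd_multiple hs.ne' (j := 1) (by simp [θ]; field_simp; ring) hsin.ne']
  exact div_neg_of_neg_of_pos (mul_neg_of_pos_of_neg (div_pos (by linarith) hs) hsin_succ) hsin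

theorem riley_root_exists_neg_twist (n : ℤ) (hn : n ≤ -3) :
    0 < 2 - 2 * Real.cos (Real.pi / (2 * (|n| : ℝ) - 1)) ∧
    2 - 2 * Real.cos (Real.pi / (2 * (|n| : ℝ) - 1)) <
      2 - 2 * Real.cos (3 * Real.pi / (2 * (|n| : ℝ) - 1)) ∧
    2 - 2 * Real.cos (3 * Real.pi / (2 * (|n| : ℝ) - 1)) < 4 ∧
    ∀ s : ℝ, 0 < s → ∃ T : ℝ,
      s + 2 + (2 - 2 * Real.cos (Real.pi / (2 * (|n| : ℝ) - 1))) / s < T ∧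
      T < s + 2 + (2 - 2 * Real.cos (3 * Real.pi / (2 * (|n| : ℝ) - 1))) / s ∧
      rileyPhi n s T = 0 := by
  obtain ⟨m, hm, rfl⟩ : ∃ m : ℕ, 2 ≤ m ∧ n = -(m + 1 : ℕ) :=
    ⟨(-n).toNat - 1, by omega, by omega⟩
  have hN : 2 * (|(-(m + 1 : ℕ) : ℤ)| : ℝ) - 1 = 2 * m + 1 := by
    push_cast
    rw [abs_of_neg (by linarith)]
    ring
  rw [hN]
  have hθ₁ : 0 < π / (2 * m + 1) := by positivity
  have hθ₁₂ : π / (2 * m + 1) < 3 * π / (2 * m + 1) := by gcongr; linarith [pi_pos]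
  have hθ₂ := three_pi_div_lt_pi hm
  have hcos₁ := cos_lt_cos_of_nonneg_of_le_pi le_rfl (hθ₁₂.trans hθ₂).le hθ₁
  have hcos₁₂ := cos_lt_cos_of_nonneg_of_le_pi hθ₁.le hθ₂.le hθ₁₂
  have hcos₂ := cos_lt_cos_of_nonneg_of_le_pi (hθ₁.trans hθ₁₂).le le_rfl hθ₂
  rw [cos_zero] at hcos₁
  rw [cos_pi] at hcos₂
  refine ⟨by linarith, by linarith, by linarith, fun s hs => ?_⟩
  have hT : s + 2 + (2 - 2 * cos (π / (2 * m + 1))) / s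
      ≤ s + 2 + (2 - 2 * cos (3 * π / (2 * m + 1))) / s := by
    gcongr
  obtain ⟨T, ⟨hT₁, hT₂⟩, hφ⟩ := intermediate_value_Ioo' hT (continuous_rileyPhi _ s).continuousOn
    ⟨rileyPhi_neg_at_three_pi_div hm hs, rileyPhi_pos_at_pi_div (by omega) hs⟩
  exact ⟨T, hT₁, hT₂, hφ⟩
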